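/- In the ring of formal power series in two variables x and q with integer coefficients, Σ_{r=0}^∞ (x)_{r+1} x^r = 1 + Σ_{r=1}^∞ (−1)^r [x^{3r−1} q^{r(3r−1)/2} + x^{3r} q^{r(3r+1)/2}], where (x)_{r+1} = (1 − x)(1 − xq)(1 − xq²)⋯(1 − x q^r). -/

import Mathlib

open PowerSeries Finset

/-- `ℤ⟦x,q⟧`, realized as `(ℤ⟦q⟧)⟦x⟧`. -/
abbrev Zxq : Type := PowerSeries (PowerSeries ℤ)

/-- The variable `x`. -/
noncomputable def xv : Zxq := PowerSeries.X

/-- The variable `q`. -/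
noncomputable def qv : Zxq := PowerSeries.C (R := PowerSeries ℤ) PowerSeries.X

/-- `(x)_n = ∏_{k=0}^{n-1} (1 - x q^k)`; so `(x)_{r+1} = (1-x)(1-xq)(1-xq²)⋯(1-xq^r)`. -/
noncomputable def xPoch (n : ℕ) : Zxq :=
  ∏ k ∈ Finset.range n, (1 - xv * qv ^ k)

/-- `S(x) = Σ_{r=0}^∞ (x)_{r+1} x^r`, defined by its coefficient of `x^a`: the `r`-th
term is divisible by `x^r`, so only terms with `r ≤ a` contribute. -/
noncomputable def zagierS : Zxq :=
  PowerSeries.mk fun a =>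
    PowerSeries.coeff (R := PowerSeries ℤ) a (∑ r ∈ Finset.range (a + 1), xPoch (r + 1) * xv ^ r)

/-- `1 + Σ_{r=1}^∞ (-1)^r [x^{3r-1} q^{r(3r-1)/2} + x^{3r} q^{r(3r+1)/2}]`, defined by
its coefficient of `x^a`: only terms with `r ≤ a` contribute. -/
noncomputable def pentagonalXqSeries : Zxq :=
  PowerSeries.mk fun a =>
    (if a = 0 then 1 else 0) +
      ∑ r ∈ Finset.Icc 1 a, (-1 : PowerSeries ℤ) ^ r *
        ((if a = 3 * r - 1 then (PowerSeries.X : PowerSeries ℤ) ^ (r * (3 * r - 1) / 2) else 0) +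
         (if a = 3 * r then (PowerSeries.X : PowerSeries ℤ) ^ (r * (3 * r + 1) / 2) else 0))

/-! Both sides are fixed points of `F(x) ↦ 1 - x²q - x³q² F(xq)`, which has at most one fixed
point because it raises the `x`-adic order. For the left side this follows from
`(x)_{r+1} = (1 - x) (xq)_r`, which gives
`S_{m+2}(x) = 1 - x²q - x³q² S_m(xq) - x^{m+3} (xq)_{m+2}` for the partial sums `S_m`; for the
right side it is the recursion `c_{a+3} = -q^{a+2} c_a` of the `x^a`-coefficients, which comes
from the increments of the pentagonal numbers. -/

theorem PowerSeries.eq_zero_of_eq_X_pow_mul_C_mul_rescale {R : Type*} [CommSemiring R]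
    {D : R⟦X⟧} {k : ℕ} (hk : 0 < k) (c a : R) (h : D = X ^ k * (C c * rescale a D)) :
    D = 0 := by
  ext n
  induction n using Nat.strong_induction_on with
  | _ n ih =>
    simp only [map_zero] at ih ⊢
    rw [h, coeff_X_pow_mul', coeff_C_mul, coeff_rescale]
    split_ifs with hkn
    · rw [ih (n - k) (by omega), mul_zero, mul_zero]
    · rfl

/-- `rescale X` is the substitution `x ↦ qx`. -/
noncomputable def zagierStep (F : Zxq) : Zxq :=
  1 - xv ^ 2 * qv - xv ^ 3 * qv ^ 2 * rescale X F

noncomputable def zagierPartialSum (m : ℕ) : Zxq :=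
  ∑ r ∈ range (m + 1), xPoch (r + 1) * xv ^ r

lemma rescale_X_qv : rescale (X : ℤ⟦X⟧) qv = qv := by
  ext n : 1
  rw [qv, coeff_rescale, coeff_C]
  split_ifs with hn
  · rw [hn, pow_zero, one_mul]
  · rw [mul_zero]

lemma rescale_X_xv : rescale (X : ℤ⟦X⟧) xv = qv * xv :=
  rescale_X X

lemma xPoch_succ (n : ℕ) : xPoch (n + 1) = (1 - xv) * rescale X (xPoch n) := by
  simp only [xPoch, map_prod, map_sub, map_one, map_mul, map_pow, rescale_X_xv, rescale_X_qv,
    prod_range_succ', pow_zero, mul_one, pow_succ]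
  rw [mul_comm]
  congr 1
  refine prod_congr rfl fun k _ => ?_
  ring

lemma rescale_X_xPoch_succ (n : ℕ) :
    rescale X (xPoch (n + 1)) = rescale X (xPoch n) * (1 - xv * qv ^ (n + 1)) := by
  rw [xPoch, prod_range_succ, map_mul, ← xPoch, map_sub, map_one, map_mul, map_pow, rescale_X_xv,
    rescale_X_qv]
  ring

lemma zagierPartialSum_add_two (m : ℕ) :
    zagierPartialSum (m + 2) =
      zagierStep (zagierPartialSum m) - xv ^ (m + 3) * rescale X (xPoch (m + 2)) := by
  induction m with
  | zero =>
    simp only [zagierPartialSum, zagierStep, xPoch, sum_range_succ, sum_range_zero,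
      prod_range_succ, prod_range_zero, map_add, map_zero, map_mul, map_sub, map_one, map_pow,
      rescale_X_xv, rescale_X_qv]
    ring
  | succ m ih =>
    have hstep :
        zagierPartialSum (m + 3) = zagierPartialSum (m + 2) + xPoch (m + 4) * xv ^ (m + 3) :=
      sum_range_succ _ _
    have hstep' : zagierPartialSum (m + 1) = zagierPartialSum m + xPoch (m + 2) * xv ^ (m + 1) :=
      sum_range_succ _ _
    rw [hstep, ih, hstep', xPoch_succ (m + 3), rescale_X_xPoch_succ (m + 2)]
    simp only [zagierStep, map_add, map_mul, map_pow, rescale_X_xv, xPoch_succ (m + 1)]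
    ring

lemma coeff_zagierPartialSum {n m : ℕ} (h : n ≤ m) :
    coeff n (zagierPartialSum m) = coeff n zagierS := by
  induction m, h using Nat.le_induction with
  | base => rw [zagierS, coeff_mk, zagierPartialSum]
  | succ m hnm ih =>
    rw [← ih, zagierPartialSum, sum_range_succ, map_add, ← zagierPartialSum, xv,
      coeff_mul_X_pow', if_neg (by omega), add_zero]

lemma coeff_zagierStep (F : Zxq) (n : ℕ) :
    coeff n (zagierStep F) =
      (if n = 0 then 1 else 0) - (if n = 2 then (X : ℤ⟦X⟧) else 0) -
        (if 3 ≤ n then (X : ℤ⟦X⟧) ^ (n - 1) * coeff (n - 3) F else 0) := by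
  have hmono : xv ^ 2 * qv = C X * X ^ 2 := mul_comm _ _
  have hshift : xv ^ 3 * qv ^ 2 * rescale X F = X ^ 3 * (C (X ^ 2) * rescale X F) := by
    rw [qv, ← map_pow, xv]; ring
  rw [zagierStep, map_sub, map_sub, coeff_one, hmono, hshift, coeff_C_mul, coeff_X_pow,
    coeff_X_pow_mul', coeff_C_mul, coeff_rescale]
  congr 1
  · simp
  · split_ifs with hn
    · rw [← mul_assoc, ← pow_add, show 2 + (n - 3) = n - 1 by omega]
    · rfl

lemma isFixedPt_zagierStep_zagierS : Function.IsFixedPt zagierStep zagierS := by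
  ext n : 1
  have htail : coeff n (xv ^ (n + 3) * rescale X (xPoch (n + 2))) = 0 := by
    rw [xv, coeff_X_pow_mul', if_neg (by omega)]
  rw [← coeff_zagierPartialSum (Nat.le_add_right n 2), zagierPartialSum_add_two, map_sub, htail,
    sub_zero, coeff_zagierStep, coeff_zagierStep, coeff_zagierPartialSum (Nat.sub_le n 3)]

lemma eq_of_isFixedPt_zagierStep {F G : Zxq} (hF : Function.IsFixedPt zagierStep F)
    (hG : Function.IsFixedPt zagierStep G) : F = G := by
  rw [← sub_eq_zero]
  refine eq_zero_of_eq_X_pow_mul_C_mul_rescale three_pos (-X ^ 2) X ?_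
  conv_lhs => rw [← hF, ← hG]
  simp only [zagierStep, xv, qv, map_sub, map_neg, map_pow]
  ring

lemma pentagonal_succ (r : ℕ) :
    (r + 1) * (3 * (r + 1) - 1) / 2 = r * (3 * r - 1) / 2 + (3 * r + 1) := by
  have : (r + 1) * (3 * (r + 1) - 1) = r * (3 * r - 1) + 2 * (3 * r + 1) := by
    rcases r with _ | r
    · rfl
    · rw [show 3 * (r + 1 + 1) - 1 = 3 * r + 5 by omega,
        show 3 * (r + 1) - 1 = 3 * r + 2 by omega]
      ring
  rw [this, Nat.add_mul_div_left _ _ two_pos]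

lemma pentagonal_succ' (r : ℕ) :
    (r + 1) * (3 * (r + 1) + 1) / 2 = r * (3 * r + 1) / 2 + (3 * r + 2) := by
  rw [show (r + 1) * (3 * (r + 1) + 1) = r * (3 * r + 1) + 2 * (3 * r + 2) by ring,
    Nat.add_mul_div_left _ _ two_pos]

noncomputable def pentagonalTerm (a r : ℕ) : ℤ⟦X⟧ :=
  (-1 : ℤ⟦X⟧) ^ r *
    ((if a = 3 * r - 1 then (X : ℤ⟦X⟧) ^ (r * (3 * r - 1) / 2) else 0) +
     (if a = 3 * r then (X : ℤ⟦X⟧) ^ (r * (3 * r + 1) / 2) else 0))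

lemma coeff_pentagonalXqSeries (a : ℕ) :
    coeff a pentagonalXqSeries =
      (if a = 0 then 1 else 0) + ∑ i ∈ range a, pentagonalTerm a (i + 1) := by
  rw [pentagonalXqSeries, coeff_mk, ← Finset.Ico_add_one_right_eq_Icc, sum_Ico_eq_sum_range,
    add_tsub_cancel_right]
  simp only [pentagonalTerm, add_comm 1]

lemma pentagonalTerm_eq_zero {a r : ℕ} (h : a < r) : pentagonalTerm a r = 0 := by
  rw [pentagonalTerm, if_neg (by omega), if_neg (by omega), add_zero, mul_zero]

lemma pentagonalTerm_add_three_one (a : ℕ) :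
    pentagonalTerm (a + 3) 1 = -X ^ (a + 2) * if a = 0 then 1 else 0 := by
  rcases a with _ | a
  · norm_num [pentagonalTerm]
  · rw [pentagonalTerm, if_neg (by omega), if_neg (by omega), if_neg (by omega)]
    simp

lemma pentagonalTerm_add_three (a : ℕ) {r : ℕ} (hr : 0 < r) :
    pentagonalTerm (a + 3) (r + 1) = -X ^ (a + 2) * pentagonalTerm a r := by
  unfold pentagonalTerm
  by_cases h₁ : a = 3 * r - 1
  · rw [if_pos (by omega), if_neg (by omega), if_pos h₁, if_neg (by omega), pentagonal_succ,
      show 3 * r + 1 = a + 2 by omega, pow_add]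
    ring
  by_cases h₂ : a = 3 * r
  · rw [if_neg (by omega), if_pos (by omega), if_neg h₁, if_pos h₂, pentagonal_succ',
      show 3 * r + 2 = a + 2 by omega, pow_add]
    ring
  rw [if_neg (by omega), if_neg (by omega), if_neg h₁, if_neg h₂]
  ring

lemma coeff_pentagonalXqSeries_add_three (a : ℕ) :
    coeff (a + 3) pentagonalXqSeries = -X ^ (a + 2) * coeff a pentagonalXqSeries := by
  have hshift : ∑ i ∈ range (a + 2), pentagonalTerm (a + 3) (i + 1 + 1) =
      -X ^ (a + 2) * ∑ i ∈ range a, pentagonalTerm a (i + 1) := by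
    rw [sum_range_succ, sum_range_succ, mul_sum]
    simp only [pentagonalTerm_add_three a (Nat.succ_pos _)]
    rw [pentagonalTerm_eq_zero (by omega), pentagonalTerm_eq_zero (by omega), mul_zero, add_zero,
      add_zero]
  rw [coeff_pentagonalXqSeries, coeff_pentagonalXqSeries, if_neg (by omega), zero_add,
    sum_range_succ', hshift, pentagonalTerm_add_three_one, mul_add, add_comm]

lemma isFixedPt_zagierStep_pentagonalXqSeries :
    Function.IsFixedPt zagierStep pentagonalXqSeries := by
  ext n : 1
  rw [coeff_zagierStep]
  match n with
  | 0 => simp [coeff_pentagonalXqSeries]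
  | 1 => simp [coeff_pentagonalXqSeries, pentagonalTerm]
  | 2 => simp [coeff_pentagonalXqSeries, pentagonalTerm, sum_range_succ]
  | a + 3 =>
    rw [coeff_pentagonalXqSeries_add_three, if_neg (by omega), if_neg (by omega),
      if_pos (by omega), show a + 3 - 1 = a + 2 by omega, Nat.add_sub_cancel]
    ring

/-- `Σ_{r=0}^∞ (x)_{r+1} x^r = 1 + Σ_{r=1}^∞ (-1)^r [x^{3r-1} q^{r(3r-1)/2} + x^{3r} q^{r(3r+1)/2}]`
in `ℤ⟦x,q⟧`. -/
theorem zagierS_eq_pentagonalXqSeries : zagierS = pentagonalXqSeries :=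
  eq_of_isFixedPt_zagierStep isFixedPt_zagierStep_zagierS isFixedPt_zagierStep_pentagonalXqSeries
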